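/- arXiv:1202.4110 — 4 statements merged into one kernel-verified Lean document; each statement's English description precedes it below -/
import Mathlib

section
/- Every coefficient of the Stern polynomial a(n; z) is either 0 or 1. -/
/-! Since `X * a(n; z²)` has only odd and `a(n+1; z²)` only even exponents, every coefficient of
`a(2n+1; z)` is a coefficient of `a(n; z)` or of `a(n+1; z)`, and every coefficient of `a(2n; z)`
is a coefficient of `a(n; z)` or zero; strong induction on `n` does the rest. -/

open Polynomial

/-- The Stern polynomials: a(0;z)=0, a(1;z)=1, a(2n;z)=a(n;z^2),
    a(2n+1;z)=z*a(n;z^2)+a(n+1;z^2). -/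
noncomputable def stern : ℕ → Polynomial ℤ
  | 0 => 0
  | 1 => 1
  | (n+2) =>
    if _h : n % 2 = 0 then (stern (n/2+1)).comp (X^2)
    else X * (stern (n/2+1)).comp (X^2) + (stern (n/2+2)).comp (X^2)
  decreasing_by all_goals omega

namespace Polynomial

section Semiring

variable {R : Type*} [Semiring R]

def ZeroOneCoeffs (p : R[X]) : Prop :=
  ∀ k, p.coeff k = 0 ∨ p.coeff k = 1

namespace ZeroOneCoeffs

theorem zero : ZeroOneCoeffs (0 : R[X]) :=
  fun _ => Or.inl (coeff_zero _)

theorem one : ZeroOneCoeffs (1 : R[X]) := by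
  intro k
  rw [coeff_one]
  split_ifs <;> simp

theorem X_mul {p : R[X]} (hp : ZeroOneCoeffs p) : ZeroOneCoeffs (X * p) := by
  rintro (_ | k)
  · exact Or.inl (coeff_X_mul_zero p)
  · rw [coeff_X_mul]
    exact hp k

theorem add {p q : R[X]} (hp : ZeroOneCoeffs p) (hq : ZeroOneCoeffs q)
    (hdisj : ∀ k, p.coeff k = 0 ∨ q.coeff k = 0) : ZeroOneCoeffs (p + q) := by
  intro k
  rw [coeff_add]
  rcases hdisj k with h | h
  · rw [h, zero_add]; exact hq k
  · rw [h, add_zero]; exact hp k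

end ZeroOneCoeffs

end Semiring

section CommSemiring

variable {R : Type*} [CommSemiring R]

theorem ZeroOneCoeffs.expand {p : R[X]} (hp : ZeroOneCoeffs p) {d : ℕ} (hd : 0 < d) :
    ZeroOneCoeffs (expand R d p) := by
  intro k
  rw [coeff_expand hd]
  split_ifs
  · exact hp _
  · exact Or.inl rfl

theorem coeff_X_mul_expand_two_eq_zero_or_coeff_expand_two_eq_zero (p q : R[X]) (k : ℕ) :
    (X * expand R 2 p).coeff k = 0 ∨ (expand R 2 q).coeff k = 0 := by
  rcases Nat.even_or_odd' k with ⟨j, rfl | rfl⟩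
  · left
    rcases j with _ | j
    · exact coeff_X_mul_zero _
    · rw [show 2 * (j + 1) = (2 * j + 1) + 1 by ring, coeff_X_mul, coeff_expand two_pos,
        if_neg (by omega)]
  · right
    rw [coeff_expand two_pos, if_neg (by omega)]

end CommSemiring

end Polynomial

theorem stern_two_mul (n : ℕ) : stern (2 * n) = expand ℤ 2 (stern n) := by
  rcases n with _ | n
  · simp [stern]
  · rw [show 2 * (n + 1) = 2 * n + 2 by ring, stern, dif_pos (by omega),
      show 2 * n / 2 = n by omega, expand_eq_comp_X_pow]

theorem stern_two_mul_add_one (n : ℕ) :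
    stern (2 * n + 1) = X * expand ℤ 2 (stern n) + expand ℤ 2 (stern (n + 1)) := by
  rcases n with _ | n
  · simp [stern]
  · rw [show 2 * (n + 1) + 1 = (2 * n + 1) + 2 by ring, stern, dif_neg (by omega),
      show (2 * n + 1) / 2 = n by omega, expand_eq_comp_X_pow, expand_eq_comp_X_pow]

theorem zeroOneCoeffs_stern (n : ℕ) : ZeroOneCoeffs (stern n) := by
  induction n using Nat.strong_induction_on with
  | _ n ih =>
  obtain ⟨m, rfl | rfl⟩ := Nat.even_or_odd' n
  · rcases m.eq_zero_or_pos with rfl | hm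
    · simpa [stern] using ZeroOneCoeffs.zero
    · rw [stern_two_mul]
      exact ZeroOneCoeffs.expand (ih m (by omega)) two_pos
  · rcases m.eq_zero_or_pos with rfl | hm
    · simpa [stern] using ZeroOneCoeffs.one
    · rw [stern_two_mul_add_one]
      exact ZeroOneCoeffs.add (ZeroOneCoeffs.expand (ih m (by omega)) two_pos).X_mul
        (ZeroOneCoeffs.expand (ih (m + 1) (by omega)) two_pos)
        (coeff_X_mul_expand_two_eq_zero_or_coeff_expand_two_eq_zero _ _)

theorem stern_coeff_zero_or_one (n k : ℕ) :
    (stern n).coeff k = 0 ∨ (stern n).coeff k = 1 :=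
  zeroOneCoeffs_stern n k
end

section
/- With s_k, t_k as in the previous context for a binary sequence {b_k}, if s_m ≠ 0 then the order of vanishing at z = 0 (i.e., the degree of the lowest-degree nonzero term) of s_m is exactly Σ_{j=0}^{m} 2^j b_j. -/
/-!
If `b_k = 1` the recursion multiplies `s_k` by `z^(2^k)`, and if `b_k = 0` it adds
`z^(2^k) t_k`. By induction the order of `s_k` is a binary number with `k` digits, hence
below `2^k`, so the added term never reaches the lowest term of `s_k`; in particular
`s_k` never vanishes.
-/

open Polynomial

namespace Polynomial

variable {R : Type*} [Semiring R] {p q : R[X]} {n : ℕ}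

theorem coeff_add_X_pow_mul_of_lt {d : ℕ} (hd : d < n) :
    (p + X ^ n * q).coeff d = p.coeff d := by
  simp [coeff_X_pow_mul', not_le.2 hd]

theorem add_X_pow_mul_ne_zero (hp : p ≠ 0) (h : p.natTrailingDegree < n) :
    p + X ^ n * q ≠ 0 := fun h0 => by
  have hcoeff := coeff_add_X_pow_mul_of_lt (p := p) (q := q) h
  rw [h0, coeff_zero] at hcoeff
  exact trailingCoeff_nonzero_iff_nonzero.2 hp hcoeff.symm

theorem natTrailingDegree_add_X_pow_mul (hp : p ≠ 0) (h : p.natTrailingDegree < n) :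
    (p + X ^ n * q).natTrailingDegree = p.natTrailingDegree := by
  refine le_antisymm (natTrailingDegree_le_of_ne_zero ?_) (le_natTrailingDegree
    (add_X_pow_mul_ne_zero hp h) fun m hm => ?_)
  · rw [coeff_add_X_pow_mul_of_lt h]
    exact trailingCoeff_nonzero_iff_nonzero.2 hp
  · rw [coeff_add_X_pow_mul_of_lt (hm.trans h), coeff_eq_zero_of_lt_natTrailingDegree hm]

end Polynomial

theorem sum_range_two_pow_mul_lt {b : ℕ → ℕ} (hb : ∀ j, b j ≤ 1) (k : ℕ) :
    ∑ j ∈ Finset.range k, 2 ^ j * b j < 2 ^ k := by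
  induction k with
  | zero => simp
  | succ k ih =>
    have hlast : 2 ^ k * b k ≤ 2 ^ k := mul_le_of_le_one_right (Nat.zero_le _) (hb k)
    rw [Finset.sum_range_succ, pow_succ]
    omega

theorem sm_trailing_degree_general
    (b : ℕ → ℕ) (hb : ∀ k, b k = 0 ∨ b k = 1)
    (s t : ℕ → Polynomial ℤ)
    (hs0 : s 0 = 1)
    (hs : ∀ k, s (k+1) = C (1 - (b k : ℤ)) * s k + X^(2^k) * (C (b k : ℤ) * (s k - t k) + t k))
    (m : ℕ) :
    (s (m+1)).natTrailingDegree = ∑ j ∈ Finset.range (m+1), 2^j * b j := by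
  suffices H : ∀ k, s k ≠ 0 ∧ (s k).natTrailingDegree = ∑ j ∈ Finset.range k, 2^j * b j from
    (H (m+1)).2
  intro k
  induction k with
  | zero => simp [hs0]
  | succ k ih =>
    obtain ⟨hne, hdeg⟩ := ih
    rw [Finset.sum_range_succ]
    rcases hb k with hbk | hbk
    · have hlt : (s k).natTrailingDegree < 2 ^ k :=
        hdeg ▸ sum_range_two_pow_mul_lt (fun j => by rcases hb j with h | h <;> omega) k
      have hstep : s (k+1) = s k + X ^ 2 ^ k * t k := by simp [hs k, hbk]
      rw [hstep, natTrailingDegree_add_X_pow_mul hne hlt, hdeg, hbk]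
      exact ⟨add_X_pow_mul_ne_zero hne hlt, rfl⟩
    · have hstep : s (k+1) = s k * X ^ 2 ^ k := by simp [hs k, hbk, X_pow_mul]
      rw [hstep, natTrailingDegree_mul_X_pow hne, hdeg, hbk, mul_one]
      exact ⟨mul_ne_zero hne (pow_ne_zero _ X_ne_zero), rfl⟩

theorem sm_trailing_degree
    (b : ℕ → ℕ) (hb : ∀ k, b k = 0 ∨ b k = 1)
    (s t : ℕ → Polynomial ℤ)
    (hs0 : s 0 = 1) (ht0 : t 0 = 0)
    (hs : ∀ k, s (k+1) = C (1 - (b k : ℤ)) * s k + X^(2^k) * (C (b k : ℤ) * (s k - t k) + t k))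
    (ht : ∀ k, t (k+1) = C (b k : ℤ) * s k + t k)
    (m : ℕ) (hsm : s (m+1) ≠ 0) :
    (s (m+1)).natTrailingDegree = ∑ j ∈ Finset.range (m+1), 2^j * b j :=
  sm_trailing_degree_general b hb s t hs0 hs m
end

section
/- Let {b_k} be a binary sequence with b_{k₀} = 1 for some k₀, and let s_k, t_k be as defined. Then for all m ≥ k₀, deg(s_m + t_m) = 2^m + Σ_{j=k₀+1}^{m} 2^{j−1} b_j, where k₀ is the index of the first occurrence of 1 in {b_k}. In particular, deg(s_m + t_m) < 2^{m+1}. -/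
open Polynomial

/-!
Before the first one-bit the pair `(s, t)` stays `(1, 0)`, and the bit `b k₀ = 1` turns it into
`(X ^ 2 ^ k₀, 1)`. From then on `deg s = 2 ^ m + deg t`: a zero bit replaces `s` by
`s + X ^ 2 ^ (m + 1) * t`, a one bit replaces `(s, t)` by `(X ^ 2 ^ (m + 1) * s, s + t)`, and in both
cases the leading term is never cancelled. So `deg t` accumulates `2 ^ m * b (m + 1)`, a partial
binary expansion, which is below `2 ^ m`.
-/

theorem degree_X_pow_mul {R : Type*} [Semiring R] [Nontrivial R] (p : R[X]) (n : ℕ) :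
    (X ^ n * p).degree = n + p.degree := by
  rw [X_pow_mul, degree_mul_X_pow, add_comm]

theorem degree_sternStep {R : Type*} [Ring R] [Nontrivial R] {p q : R[X]} {β k S : ℕ}
    (hβ : β = 0 ∨ β = 1) (hp : p.degree = ↑(2 ^ k + S)) (hq : q.degree = ↑S) :
    (C (1 - (β : R)) * p + X ^ 2 ^ (k + 1) * (C (β : R) * (p - q) + q)).degree =
        ↑(2 ^ (k + 1) + (S + 2 ^ k * β)) ∧
      (C (β : R) * p + q).degree = ↑(S + 2 ^ k * β) := by
  have hk := Nat.two_pow_pos k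
  rcases hβ with rfl | rfl
  · have hpX : p.degree < (X ^ 2 ^ (k + 1) * q).degree := by
      rw [hp, degree_X_pow_mul, hq]; exact_mod_cast by rw [pow_succ]; omega
    simp only [Nat.cast_zero, sub_zero, map_one, one_mul, map_zero, zero_mul, zero_add,
      mul_zero, add_zero]
    rw [degree_add_eq_right_of_degree_lt hpX, degree_X_pow_mul, hq]
    exact ⟨by norm_cast, by simp⟩
  · have hqp : q.degree < p.degree := by rw [hp, hq]; exact_mod_cast by omega
    simp only [Nat.cast_one, sub_self, map_zero, zero_mul, map_one, one_mul, sub_add_cancel,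
      zero_add, mul_one]
    rw [degree_X_pow_mul, hp, degree_add_eq_left_of_degree_lt hqp, hp]
    exact ⟨by norm_cast; ring, by rw [add_comm]⟩

section SternRecurrence

variable {R : Type*} [Ring R] {b : ℕ → ℕ} {s t : ℕ → R[X]}
  (hs : ∀ k, s (k + 1) = C (1 - (b k : R)) * s k + X ^ 2 ^ k * (C (b k : R) * (s k - t k) + t k))
  (ht : ∀ k, t (k + 1) = C (b k : R) * s k + t k)
include hs ht

theorem sternPair_eq_one_zero_of_le (hs0 : s 0 = 1) (ht0 : t 0 = 0) {k₀ : ℕ}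
    (hk₀min : ∀ j < k₀, b j = 0) : ∀ j ≤ k₀, s j = 1 ∧ t j = 0 := by
  intro j hj
  induction j with
  | zero => exact ⟨hs0, ht0⟩
  | succ j ih =>
    obtain ⟨hsj, htj⟩ := ih (by omega)
    simp [hs, ht, hsj, htj, hk₀min j hj]

theorem degree_sternPair_succ [Nontrivial R] (hb : ∀ k, b k = 0 ∨ b k = 1) (hs0 : s 0 = 1)
    (ht0 : t 0 = 0) {k₀ : ℕ} (hk₀ : b k₀ = 1) (hk₀min : ∀ j < k₀, b j = 0) :
    ∀ m, k₀ ≤ m →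
      (s (m + 1)).degree = ↑(2 ^ m + ∑ j ∈ Finset.Icc (k₀ + 1) m, 2 ^ (j - 1) * b j) ∧
      (t (m + 1)).degree = ↑(∑ j ∈ Finset.Icc (k₀ + 1) m, 2 ^ (j - 1) * b j) := by
  intro m hm
  induction m, hm using Nat.le_induction with
  | base =>
    obtain ⟨hsk₀, htk₀⟩ := sternPair_eq_one_zero_of_le hs ht hs0 ht0 hk₀min k₀ le_rfl
    rw [Finset.Icc_eq_empty (by omega), hs k₀, ht k₀, hsk₀, htk₀, hk₀]
    simp
  | succ m hm ih =>
    rw [Finset.sum_Icc_succ_top (show k₀ + 1 ≤ m + 1 by omega), Nat.add_sub_cancel,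
      hs (m + 1), ht (m + 1)]
    exact degree_sternStep (hb (m + 1)) ih.1 ih.2

end SternRecurrence

theorem sum_Icc_two_pow_mul_lt {b : ℕ → ℕ} (hb : ∀ j, b j ≤ 1) (k : ℕ) :
    ∀ m, ∑ j ∈ Finset.Icc (k + 1) m, 2 ^ (j - 1) * b j < 2 ^ m
  | 0 => by simp
  | m + 1 => by
    by_cases hkm : k + 1 ≤ m + 1
    · rw [Finset.sum_Icc_succ_top hkm, Nat.add_sub_cancel, pow_succ]
      have := sum_Icc_two_pow_mul_lt hb k m
      have := Nat.mul_le_mul_left (2 ^ m) (hb (m + 1))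
      omega
    · rw [Finset.Icc_eq_empty (by omega)]
      positivity

theorem sm_add_tm_natDegree
    (b : ℕ → ℕ) (hb : ∀ k, b k = 0 ∨ b k = 1)
    (s t : ℕ → Polynomial ℤ)
    (hs0 : s 0 = 1) (ht0 : t 0 = 0)
    (hs : ∀ k, s (k+1) = C (1 - (b k : ℤ)) * s k + X^(2^k) * (C (b k : ℤ) * (s k - t k) + t k))
    (ht : ∀ k, t (k+1) = C (b k : ℤ) * s k + t k)
    (k₀ : ℕ) (hk₀ : b k₀ = 1) (hk₀min : ∀ j < k₀, b j = 0) :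
    ∀ m : ℕ, k₀ ≤ m →
      (s (m+1) + t (m+1)).natDegree = 2^m + ∑ j ∈ Finset.Icc (k₀+1) m, 2^(j-1) * b j ∧
      (s (m+1) + t (m+1)).natDegree < 2^(m+1) := by
  intro m hm
  obtain ⟨hds, hdt⟩ := degree_sternPair_succ hs ht hb hs0 ht0 hk₀ hk₀min m hm
  have hts : (t (m + 1)).degree < (s (m + 1)).degree := by
    rw [hds, hdt]; exact_mod_cast Nat.lt_add_of_pos_left (Nat.two_pow_pos m)
  have hdeg := natDegree_eq_of_degree_eq_some ((degree_add_eq_left_of_degree_lt hts).trans hds)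
  refine ⟨hdeg, ?_⟩
  have := sum_Icc_two_pow_mul_lt (fun j => show b j ≤ 1 by rcases hb j with h | h <;> omega) k₀ m
  rw [hdeg, pow_succ]
  omega
end

section
/- Let ψ_n(q) = a(2^n − 1; q). Then for all n ≥ 2, ψ_n(q)·ψ_n(q²) − ψ_{n+1}(q)·ψ_{n−1}(q²) = q^{2(2^{n−1} − 1)}. -/
/-!
Write `ψ n = a(2ⁿ - 1)`. The Stern recurrences give two recursions for `ψ`:
`ψ (n+1) = X · ψ n (X²) + 1` (from `2ⁿ⁺¹ - 1 = 2(2ⁿ - 1) + 1` and `a(2ⁿ) = 1`) and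
`ψ (n+1) = ψ n + X^(2ⁿ - 1)`. Substituting the first into both products, the cross terms
`X · ψ n (X²) · ψ (n-1) (X²)` cancel and the left-hand side collapses to
`ψ n (X²) - ψ (n-1) (X²)`, which the second recursion identifies as `X^(2(2ⁿ⁻¹ - 1))`.
-/

open Polynomial

namespace stern

@[simp] lemma zero : stern 0 = 0 := by rw [stern]

@[simp] lemma one : stern 1 = 1 := by rw [stern]

lemma two_mul (k : ℕ) : stern (2 * k) = (stern k).comp (X ^ 2) := by
  rcases k with _ | k
  · simp
  · rw [show 2 * (k + 1) = 2 * k + 2 by ring, stern]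
    simp [Nat.mul_mod_right]

lemma two_mul_add_one (k : ℕ) :
    stern (2 * k + 1) = X * (stern k).comp (X ^ 2) + (stern (k + 1)).comp (X ^ 2) := by
  rcases k with _ | k
  · simp
  · rw [show 2 * (k + 1) + 1 = (2 * k + 1) + 2 by ring, stern]
    simp [show (2 * k + 1) % 2 = 1 by omega, show (2 * k + 1) / 2 = k by omega]

lemma two_pow (n : ℕ) : stern (2 ^ n) = 1 := by
  induction n with
  | zero => simp
  | succ n ih => rw [pow_succ', two_mul, ih, one_comp]

end stern

noncomputable def sternPsi (n : ℕ) : ℤ[X] := stern (2 ^ n - 1)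

namespace sternPsi

@[simp] lemma zero : sternPsi 0 = 0 := by simp [sternPsi]

lemma succ (n : ℕ) : sternPsi (n + 1) = X * (sternPsi n).comp (X ^ 2) + 1 := by
  have hpos := Nat.one_le_two_pow (n := n)
  rw [sternPsi, show 2 ^ (n + 1) - 1 = 2 * (2 ^ n - 1) + 1 by rw [pow_succ]; omega,
    stern.two_mul_add_one, Nat.sub_add_cancel hpos, stern.two_pow, one_comp, sternPsi]

lemma succ_eq_add (n : ℕ) : sternPsi (n + 1) = sternPsi n + X ^ (2 ^ n - 1) := by
  induction n with
  | zero => simp [succ]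
  | succ n ih =>
    have hexp : 2 ^ (n + 1) - 1 = 2 * (2 ^ n - 1) + 1 := by
      have := Nat.one_le_two_pow (n := n); rw [pow_succ]; omega
    calc sternPsi (n + 2) = X * (sternPsi (n + 1)).comp (X ^ 2) + 1 := succ (n + 1)
      _ = (X * (sternPsi n).comp (X ^ 2) + 1) + X * X ^ (2 * (2 ^ n - 1)) := by
        rw [ih, add_comp, X_pow_comp, ← pow_mul]; ring
      _ = sternPsi (n + 1) + X ^ (2 ^ (n + 1) - 1) := by rw [← succ, hexp, pow_succ']

lemma succ_comp_X_sq (n : ℕ) :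
    (sternPsi (n + 1)).comp (X ^ 2) = (sternPsi n).comp (X ^ 2) + X ^ (2 * (2 ^ n - 1)) := by
  rw [succ_eq_add, add_comp, X_pow_comp, ← pow_mul]

end sternPsi

theorem psi_quadratic_identity (n : ℕ) (hn : 2 ≤ n) :
    stern (2^n - 1) * (stern (2^n - 1)).comp (X^2) -
      stern (2^(n+1) - 1) * (stern (2^(n-1) - 1)).comp (X^2) =
      X^(2 * (2^(n-1) - 1)) := by
  obtain ⟨m, rfl⟩ : ∃ m, n = m + 1 := ⟨n - 1, by omega⟩
  change sternPsi (m + 1) * (sternPsi (m + 1)).comp (X ^ 2) -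
      sternPsi (m + 2) * (sternPsi m).comp (X ^ 2) = X ^ (2 * (2 ^ m - 1))
  rw [sternPsi.succ (m + 1), sternPsi.succ_comp_X_sq, sternPsi.succ m]
  ring
end
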